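/- Let x ≤ w in S_n and p ∈ {0,...,n}² with rk_x(p) > rk_w(p). Define S(p) = {t_{i₁,i₂} : x < x·t_{i₁,i₂} ≤ w, (i₁, x(i₁)) ≤ p componentwise, but (i₂, x(i₂)) ≰ p}. Then S(p) contains a transposition t with x ⋖ x·t ≤ w (a covering transposition). -/
import Mathlib


open Equiv

/-- Rank function: `rk w i j = #{u = 1,...,i : w(u) ≤ j}` (1-based via `Fin`). -/
def rk {n : ℕ} (w : Equiv.Perm (Fin n)) (i j : ℕ) : ℕ :=
  (Finset.univ.filter (fun u : Fin n => u.val + 1 ≤ i ∧ (w u).val + 1 ≤ j)).card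

/-- Coxeter length = number of inversions. -/
def len {n : ℕ} (w : Equiv.Perm (Fin n)) : ℕ :=
  (Finset.univ.filter (fun p : Fin n × Fin n => p.1 < p.2 ∧ w p.2 < w p.1)).card

/-- A transposition. -/
def IsTransposition {n : ℕ} (t : Equiv.Perm (Fin n)) : Prop :=
  ∃ i j : Fin n, i ≠ j ∧ t = Equiv.swap i j

/-- Bruhat order: generated by `x → x·t` for transpositions `t` increasing the length. -/
def bruhatLE {n : ℕ} : Equiv.Perm (Fin n) → Equiv.Perm (Fin n) → Prop :=
  Relation.ReflTransGen (fun x y => ∃ t, IsTransposition t ∧ y = x * t ∧ len x < len y)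

/-- Strict Bruhat order. -/
def bruhatLT {n : ℕ} (x y : Equiv.Perm (Fin n)) : Prop := bruhatLE x y ∧ x ≠ y

/-- Difference function `d_w(p,p')`. -/
def dOf {n : ℕ} (w : Equiv.Perm (Fin n)) (p q : ℕ × ℕ) : ℤ :=
  (rk w p.1 p.2 : ℤ) + rk w q.1 q.2 - rk w p.1 q.2 - rk w q.1 p.2

/-- Strictly comparable points: `(i'−i)(j'−j) > 0`. -/
def SCmp (p q : ℕ × ℕ) : Prop := (p.1 < q.1 ∧ p.2 < q.2) ∨ (q.1 < p.1 ∧ q.2 < p.2)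

/-- Corners of the rectangle spanned by `p`, `q`. -/
def corners (p q : ℕ × ℕ) : Set (ℕ × ℕ) := {(p.1, q.2), (q.1, p.2)}


variable {n : ℕ}


lemma swap_val_eq (i j t : Fin n) :
    ((swap i j) t).val = if t.val = i.val then j.val else if t.val = j.val then i.val else t.val := by
  rcases eq_or_ne t i with h | hti
  · subst h
    rcases eq_or_ne t j with h2 | htj
    · subst h2; simp
    · simp [Fin.val_eq_val, htj]
  · rcases eq_or_ne t j with h2 | htj
    · subst h2
      simp [swap_apply_right, Fin.val_eq_val, hti]
    · rw [swap_apply_of_ne_of_ne hti htj]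
      simp [Fin.val_eq_val, hti, htj]

lemma swap_flip_iff {i j u v : Fin n} (hij : i < j) :
    (v < u ∧ swap i j u < swap i j v) ↔
      (u = j ∧ v = i) ∨ (v = i ∧ i < u ∧ u < j) ∨ (u = j ∧ i < v ∧ v < j) := by
  simp only [Fin.lt_def, Fin.ext_iff, swap_val_eq]
  split_ifs <;> omega


/-- `len (x * swap i j)` equals the count of pairs with the σ-twisted order condition. -/
lemma len_mul_swap_eq (x : Equiv.Perm (Fin n)) (i j : Fin n) :
    len (x * swap i j) =
      (Finset.univ.filter (fun p : Fin n × Fin n =>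
        swap i j p.1 < swap i j p.2 ∧ x p.2 < x p.1)).card := by
  apply Finset.card_bij' (fun p _ => (swap i j p.1, swap i j p.2))
    (fun p _ => (swap i j p.1, swap i j p.2))
  · intro p hp
    simp only [Finset.mem_filter, Finset.mem_univ, true_and] at hp ⊢
    simpa [Equiv.Perm.mul_apply] using hp
  · intro p hp
    simp only [Finset.mem_filter, Finset.mem_univ, true_and] at hp ⊢
    simpa [Equiv.Perm.mul_apply] using hp
  · intro p _; simp
  · intro p _; simp

lemma len_swap_count (x : Equiv.Perm (Fin n)) {i j : Fin n} (hij : i < j) (hx : x i < x j) :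
    len (x * swap i j) +
      ((Finset.univ.filter (fun k : Fin n => (i < k ∧ k < j) ∧ x k < x i)).card +
       (Finset.univ.filter (fun k : Fin n => (i < k ∧ k < j) ∧ x j < x k)).card) =
    len x +
      (1 + (Finset.univ.filter (fun k : Fin n => (i < k ∧ k < j) ∧ x i < x k)).card +
       (Finset.univ.filter (fun k : Fin n => (i < k ∧ k < j) ∧ x k < x j)).card) := by
  classical
  set σ := swap i j with hσ
  -- decompose len (x*σ)
  have hB : len (x * σ) =
      (Finset.univ.filter (fun p : Fin n × Fin n => (σ p.1 < σ p.2 ∧ x p.2 < x p.1) ∧ p.1 < p.2)).card +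
      (Finset.univ.filter (fun p : Fin n × Fin n => (σ p.1 < σ p.2 ∧ x p.2 < x p.1) ∧ ¬ p.1 < p.2)).card := by
    have h := Finset.card_filter_add_card_filter_not
      (s := Finset.univ.filter (fun p : Fin n × Fin n => σ p.1 < σ p.2 ∧ x p.2 < x p.1))
      (p := fun p => p.1 < p.2)
    rw [Finset.filter_filter, Finset.filter_filter] at h
    rw [len_mul_swap_eq, ← h]
  have hA : len x =
      (Finset.univ.filter (fun p : Fin n × Fin n => (p.1 < p.2 ∧ x p.2 < x p.1) ∧ σ p.1 < σ p.2)).card +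
      (Finset.univ.filter (fun p : Fin n × Fin n => (p.1 < p.2 ∧ x p.2 < x p.1) ∧ ¬ σ p.1 < σ p.2)).card := by
    have h := Finset.card_filter_add_card_filter_not
      (s := Finset.univ.filter (fun p : Fin n × Fin n => p.1 < p.2 ∧ x p.2 < x p.1))
      (p := fun p => σ p.1 < σ p.2)
    rw [Finset.filter_filter, Finset.filter_filter] at h
    unfold len
    rw [← h]
  have hcommon :
      (Finset.univ.filter (fun p : Fin n × Fin n => (σ p.1 < σ p.2 ∧ x p.2 < x p.1) ∧ p.1 < p.2)) =
      (Finset.univ.filter (fun p : Fin n × Fin n => (p.1 < p.2 ∧ x p.2 < x p.1) ∧ σ p.1 < σ p.2)) := by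
    apply Finset.filter_congr; intro p _; tauto
  have hEp : (Finset.univ.filter (fun p : Fin n × Fin n => (σ p.1 < σ p.2 ∧ x p.2 < x p.1) ∧ ¬ p.1 < p.2)) =
      insert ((j, i) : Fin n × Fin n)
        (((Finset.univ.filter (fun k : Fin n => (i < k ∧ k < j) ∧ x i < x k)).image (fun k => (k, i))) ∪
         ((Finset.univ.filter (fun k : Fin n => (i < k ∧ k < j) ∧ x k < x j)).image (fun k => (j, k)))) := by
    ext ⟨u, v⟩
    simp only [Finset.mem_filter, Finset.mem_univ, true_and, Finset.mem_insert,
      Finset.mem_union, Finset.mem_image, Prod.mk.injEq]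
    constructor
    · rintro ⟨⟨hσlt, hxlt⟩, hnlt⟩
      have hneq : v ≠ u := by rintro rfl; exact lt_irrefl _ hxlt
      have hvu : v < u := lt_of_le_of_ne (le_of_not_gt hnlt) hneq
      rcases (swap_flip_iff hij).1 ⟨hvu, hσlt⟩ with ⟨hu, hv⟩ | ⟨hv, h1, h2⟩ | ⟨hu, h1, h2⟩
      · exact Or.inl ⟨hu, hv⟩
      · exact Or.inr (Or.inl ⟨u, ⟨⟨h1, h2⟩, hv ▸ hxlt⟩, rfl, hv.symm⟩)
      · exact Or.inr (Or.inr ⟨v, ⟨⟨h1, h2⟩, hu ▸ hxlt⟩, hu.symm, rfl⟩)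
    · rintro (⟨hu, hv⟩ | ⟨k, ⟨⟨h1, h2⟩, h3⟩, hk1, hk2⟩ | ⟨k, ⟨⟨h1, h2⟩, h3⟩, hk1, hk2⟩)
      · subst hu; subst hv
        have h := (swap_flip_iff hij).2 (Or.inl ⟨rfl, rfl⟩)
        exact ⟨⟨h.2, hx⟩, not_lt_of_gt h.1⟩
      · subst hk1; subst hk2
        have h := (swap_flip_iff hij).2 (Or.inr (Or.inl ⟨rfl, h1, h2⟩))
        exact ⟨⟨h.2, h3⟩, not_lt_of_gt h.1⟩
      · subst hk1; subst hk2
        have h := (swap_flip_iff hij).2 (Or.inr (Or.inr ⟨rfl, h1, h2⟩))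
        exact ⟨⟨h.2, h3⟩, not_lt_of_gt h.1⟩
  have hEm : (Finset.univ.filter (fun p : Fin n × Fin n => (p.1 < p.2 ∧ x p.2 < x p.1) ∧ ¬ σ p.1 < σ p.2)) =
      (((Finset.univ.filter (fun k : Fin n => (i < k ∧ k < j) ∧ x k < x i)).image (fun k => (i, k))) ∪
       ((Finset.univ.filter (fun k : Fin n => (i < k ∧ k < j) ∧ x j < x k)).image (fun k => (k, j)))) := by
    ext ⟨u, v⟩
    simp only [Finset.mem_filter, Finset.mem_univ, true_and,
      Finset.mem_union, Finset.mem_image, Prod.mk.injEq]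
    constructor
    · rintro ⟨⟨hlt, hxlt⟩, hnσ⟩
      have hneq : σ u ≠ σ v := fun h => absurd (σ.injective h) (ne_of_lt hlt)
      have hσvu : σ v < σ u := lt_of_le_of_ne (le_of_not_gt hnσ) (Ne.symm hneq)
      rcases (swap_flip_iff hij).1 ⟨hlt, hσvu⟩ with ⟨hv, hu⟩ | ⟨hu, h1, h2⟩ | ⟨hv, h1, h2⟩
      · subst hu; subst hv; exact absurd hxlt (not_lt_of_gt hx)
      · exact Or.inl ⟨v, ⟨⟨h1, h2⟩, hu ▸ hxlt⟩, hu.symm, rfl⟩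
      · exact Or.inr ⟨u, ⟨⟨h1, h2⟩, hv ▸ hxlt⟩, rfl, hv.symm⟩
    · rintro (⟨k, ⟨⟨h1, h2⟩, h3⟩, hk1, hk2⟩ | ⟨k, ⟨⟨h1, h2⟩, h3⟩, hk1, hk2⟩)
      · subst hk1; subst hk2
        have h := (swap_flip_iff hij).2 (Or.inr (Or.inl ⟨rfl, h1, h2⟩))
        exact ⟨⟨h.1, h3⟩, not_lt_of_gt h.2⟩
      · subst hk1; subst hk2
        have h := (swap_flip_iff hij).2 (Or.inr (Or.inr ⟨rfl, h1, h2⟩))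
        exact ⟨⟨h.1, h3⟩, not_lt_of_gt h.2⟩
  -- cardinalities
  have hinj1 : Function.Injective (fun k : Fin n => ((k, i) : Fin n × Fin n)) := by
    intro a b h; exact (Prod.mk.injEq _ _ _ _ ▸ h).1
  have hinj2 : Function.Injective (fun k : Fin n => ((j, k) : Fin n × Fin n)) := by
    intro a b h; exact (Prod.mk.injEq _ _ _ _ ▸ h).2
  have hinj3 : Function.Injective (fun k : Fin n => ((i, k) : Fin n × Fin n)) := by
    intro a b h; exact (Prod.mk.injEq _ _ _ _ ▸ h).2
  have hinj4 : Function.Injective (fun k : Fin n => ((k, j) : Fin n × Fin n)) := by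
    intro a b h; exact (Prod.mk.injEq _ _ _ _ ▸ h).1
  have hd1 : Disjoint ((Finset.univ.filter (fun k : Fin n => (i < k ∧ k < j) ∧ x i < x k)).image (fun k => ((k, i) : Fin n × Fin n)))
      ((Finset.univ.filter (fun k : Fin n => (i < k ∧ k < j) ∧ x k < x j)).image (fun k => (j, k))) := by
    simp only [Finset.disjoint_left, Finset.mem_image, Finset.mem_filter, Finset.mem_univ, true_and]
    rintro ⟨u, v⟩ ⟨k, ⟨⟨_, hkj⟩, _⟩, he⟩ ⟨k', _, he'⟩
    rw [Prod.mk.injEq] at he he'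
    exact absurd (he.1 ▸ he'.1.symm : k = j) (ne_of_lt hkj)
  have hd2 : Disjoint ((Finset.univ.filter (fun k : Fin n => (i < k ∧ k < j) ∧ x k < x i)).image (fun k => ((i, k) : Fin n × Fin n)))
      ((Finset.univ.filter (fun k : Fin n => (i < k ∧ k < j) ∧ x j < x k)).image (fun k => (k, j))) := by
    simp only [Finset.disjoint_left, Finset.mem_image, Finset.mem_filter, Finset.mem_univ, true_and]
    rintro ⟨u, v⟩ ⟨k, _, he⟩ ⟨k', ⟨⟨hik', _⟩, _⟩, he'⟩
    rw [Prod.mk.injEq] at he he'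
    exact absurd (he.1 ▸ he'.1.symm : i = k') (ne_of_lt hik')
  have hnotmem : ((j, i) : Fin n × Fin n) ∉
      (((Finset.univ.filter (fun k : Fin n => (i < k ∧ k < j) ∧ x i < x k)).image (fun k => (k, i))) ∪
       ((Finset.univ.filter (fun k : Fin n => (i < k ∧ k < j) ∧ x k < x j)).image (fun k => (j, k)))) := by
    intro h
    rcases Finset.mem_union.1 h with h' | h'
    · obtain ⟨k, hk, he⟩ := Finset.mem_image.1 h'
      rw [Prod.mk.injEq] at he
      rw [Finset.mem_filter] at hk
      exact absurd he.1 (ne_of_lt hk.2.1.2)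
    · obtain ⟨k, hk, he⟩ := Finset.mem_image.1 h'
      rw [Prod.mk.injEq] at he
      rw [Finset.mem_filter] at hk
      exact absurd he.2 (ne_of_gt hk.2.1.1)
  rw [hB, hA, hcommon, hEp, hEm,
    Finset.card_insert_of_notMem hnotmem,
    Finset.card_union_of_disjoint hd1, Finset.card_union_of_disjoint hd2,
    Finset.card_image_of_injective _ hinj1, Finset.card_image_of_injective _ hinj2,
    Finset.card_image_of_injective _ hinj3, Finset.card_image_of_injective _ hinj4]
  omega

lemma len_lt_swap (x : Equiv.Perm (Fin n)) {i j : Fin n} (hij : i < j) (hx : x i < x j) :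
    len x < len (x * swap i j) := by
  have key := len_swap_count x hij hx
  have hsub : (Finset.univ.filter (fun k : Fin n => (i < k ∧ k < j) ∧ x k < x i)) ∪
      (Finset.univ.filter (fun k : Fin n => (i < k ∧ k < j) ∧ x j < x k)) ⊆
      (Finset.univ.filter (fun k : Fin n => (i < k ∧ k < j) ∧ x i < x k)) ∪
      (Finset.univ.filter (fun k : Fin n => (i < k ∧ k < j) ∧ x k < x j)) := by
    intro k hk
    simp only [Finset.mem_union, Finset.mem_filter, Finset.mem_univ, true_and] at hk ⊢
    rcases hk with ⟨h1, h2⟩ | ⟨h1, h2⟩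
    · exact Or.inr ⟨h1, h2.trans hx⟩
    · exact Or.inl ⟨h1, hx.trans h2⟩
  have hdisj : Disjoint (Finset.univ.filter (fun k : Fin n => (i < k ∧ k < j) ∧ x k < x i))
      (Finset.univ.filter (fun k : Fin n => (i < k ∧ k < j) ∧ x j < x k)) := by
    simp only [Finset.disjoint_left, Finset.mem_filter, Finset.mem_univ, true_and]
    rintro k ⟨_, h2⟩ ⟨_, h4⟩
    exact absurd ((h2.trans hx).trans h4) (lt_irrefl _)
  have h1 := Finset.card_union_of_disjoint hdisj
  have h2 := Finset.card_le_card hsub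
  have h3 := Finset.card_union_le
    (Finset.univ.filter (fun k : Fin n => (i < k ∧ k < j) ∧ x i < x k))
    (Finset.univ.filter (fun k : Fin n => (i < k ∧ k < j) ∧ x k < x j))
  omega

lemma len_swap_add_one (x : Equiv.Perm (Fin n)) {i j : Fin n} (hij : i < j) (hx : x i < x j)
    (hmid : ∀ k, i < k → k < j → ¬(x i < x k ∧ x k < x j)) :
    len (x * swap i j) = len x + 1 := by
  have key := len_swap_count x hij hx
  have e1 : (Finset.univ.filter (fun k : Fin n => (i < k ∧ k < j) ∧ x i < x k)) =
      (Finset.univ.filter (fun k : Fin n => (i < k ∧ k < j) ∧ x j < x k)) := by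
    apply Finset.filter_congr
    intro k _
    constructor
    · rintro ⟨h1, h2⟩
      refine ⟨h1, lt_of_le_of_ne (le_of_not_gt fun hc => hmid k h1.1 h1.2 ⟨h2, hc⟩) ?_⟩
      exact fun hc => absurd (x.injective hc) (ne_of_lt h1.2).symm
    · rintro ⟨h1, h2⟩
      exact ⟨h1, hx.trans h2⟩
  have e2 : (Finset.univ.filter (fun k : Fin n => (i < k ∧ k < j) ∧ x k < x j)) =
      (Finset.univ.filter (fun k : Fin n => (i < k ∧ k < j) ∧ x k < x i)) := by
    apply Finset.filter_congr
    intro k _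
    constructor
    · rintro ⟨h1, h2⟩
      refine ⟨h1, lt_of_le_of_ne (le_of_not_gt fun hc => hmid k h1.1 h1.2 ⟨hc, h2⟩) ?_⟩
      exact fun hc => absurd (x.injective hc) (ne_of_gt h1.1)
    · rintro ⟨h1, h2⟩
      exact ⟨h1, h2.trans hx⟩
  rw [e1, e2] at key
  omega

lemma swap_cancel (x : Equiv.Perm (Fin n)) (i j : Fin n) : x * swap i j * swap i j = x := by
  rw [mul_assoc, Equiv.swap_mul_self, mul_one]

lemma len_lt_swap_iff (x : Equiv.Perm (Fin n)) {i j : Fin n} (hij : i < j) :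
    len x < len (x * swap i j) ↔ x i < x j := by
  constructor
  · intro h
    rcases lt_trichotomy (x i) (x j) with hc | hc | hc
    · exact hc
    · exact absurd (x.injective hc) (ne_of_lt hij)
    · exfalso
      have h2 : (x * swap i j) i < (x * swap i j) j := by
        simp only [Equiv.Perm.mul_apply, swap_apply_left, swap_apply_right]
        exact hc
      have := len_lt_swap (x * swap i j) hij h2
      rw [swap_cancel] at this
      omega
  · exact len_lt_swap x hij

/-- Rank drop formula for a length-increasing swap. -/
lemma rk_swap_drop (x : Equiv.Perm (Fin n)) {i j : Fin n} (hij : i < j) (hx : x i < x j)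
    (u v : ℕ) :
    rk x u v = rk (x * swap i j) u v +
      (if i.val + 1 ≤ u ∧ ¬(j.val + 1 ≤ u) ∧ (x i).val + 1 ≤ v ∧ ¬((x j).val + 1 ≤ v)
       then 1 else 0) := by
  classical
  unfold rk
  rw [Finset.card_filter, Finset.card_filter]
  have hiu : (i : Fin n) ∈ Finset.univ := Finset.mem_univ _
  have hju : (j : Fin n) ∈ Finset.univ.erase i :=
    Finset.mem_erase.2 ⟨(ne_of_lt hij).symm, Finset.mem_univ _⟩
  rw [← Finset.add_sum_erase _ _ hiu, ← Finset.add_sum_erase _ _ hju,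
    ← Finset.add_sum_erase _ (fun u_1 => if u_1.val + 1 ≤ u ∧ ((x * swap i j) u_1).val + 1 ≤ v then 1 else 0) hiu,
    ← Finset.add_sum_erase _ _ hju]
  have hsame : ∀ k ∈ (Finset.univ.erase i).erase j,
      (if k.val + 1 ≤ u ∧ ((x * swap i j) k).val + 1 ≤ v then (1:ℕ) else 0) =
      (if k.val + 1 ≤ u ∧ (x k).val + 1 ≤ v then 1 else 0) := by
    intro k hk
    rw [Finset.mem_erase, Finset.mem_erase] at hk
    rw [Equiv.Perm.mul_apply, swap_apply_of_ne_of_ne hk.2.1 hk.1]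
  rw [Finset.sum_congr rfl hsame]
  have hyi : (x * swap i j) i = x j := by simp [Equiv.Perm.mul_apply]
  have hyj : (x * swap i j) j = x i := by simp [Equiv.Perm.mul_apply]
  rw [hyi, hyj]
  have hv : (x i).val < (x j).val := hx
  have hij' : i.val < j.val := hij
  split_ifs <;> omega

lemma step_normalize {x y : Equiv.Perm (Fin n)}
    (h : ∃ t, IsTransposition t ∧ y = x * t ∧ len x < len y) :
    ∃ i j : Fin n, i < j ∧ x i < x j ∧ y = x * swap i j := by
  obtain ⟨t, ⟨i, j, hne, rfl⟩, rfl, hlen⟩ := h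
  rcases lt_or_gt_of_ne hne with hij | hij
  · exact ⟨i, j, hij, (len_lt_swap_iff x hij).1 hlen, rfl⟩
  · rw [Equiv.swap_comm] at hlen ⊢
    exact ⟨j, i, hij, (len_lt_swap_iff x hij).1 hlen, rfl⟩

def coverStep (x y : Equiv.Perm (Fin n)) : Prop :=
  ∃ i j : Fin n, i < j ∧ x i < x j ∧ y = x * swap i j ∧ len y = len x + 1

lemma rk_mono_step {x y : Equiv.Perm (Fin n)}
    (h : ∃ t, IsTransposition t ∧ y = x * t ∧ len x < len y) (u v : ℕ) :
    rk y u v ≤ rk x u v := by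
  obtain ⟨i, j, hij, hx, rfl⟩ := step_normalize h
  rw [rk_swap_drop x hij hx u v]
  split_ifs <;> omega

lemma rk_mono {x w : Equiv.Perm (Fin n)} (h : bruhatLE x w) (u v : ℕ) :
    rk w u v ≤ rk x u v := by
  induction h with
  | refl => exact le_refl _
  | tail hab hbc ih => exact le_trans (rk_mono_step hbc u v) ih

lemma len_mono {x w : Equiv.Perm (Fin n)} (h : bruhatLE x w) :
    x = w ∨ len x < len w := by
  induction h with
  | refl => exact Or.inl rfl
  | tail hab hbc ih =>
    obtain ⟨t, ht, rfl, hlen⟩ := hbc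
    rcases ih with rfl | hlt
    · exact Or.inr hlen
    · exact Or.inr (hlt.trans hlen)

lemma swap_decomp {i j k : Fin n} (hik : i ≠ k) (hkj : k ≠ j) (hij : i ≠ j) :
    swap i j = swap k j * swap i k * swap k j := by
  have h1 : i.val ≠ k.val := fun h => hik (Fin.ext h)
  have h2 : k.val ≠ j.val := fun h => hkj (Fin.ext h)
  have h3 : i.val ≠ j.val := fun h => hij (Fin.ext h)
  ext u
  simp only [Equiv.Perm.mul_apply, swap_val_eq]
  split_ifs <;> omega

lemma refine_swap : ∀ (d : ℕ) (x : Equiv.Perm (Fin n)) (i j : Fin n), i < j → x i < x j →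
    len (x * swap i j) ≤ len x + d → Relation.ReflTransGen coverStep x (x * swap i j) := by
  intro d
  induction d using Nat.strong_induction_on with
  | _ d ih =>
    intro x i j hij hx hbound
    by_cases hmid : ∃ k, i < k ∧ k < j ∧ x i < x k ∧ x k < x j
    · obtain ⟨k, hik, hkj, hv1, hv2⟩ := hmid
      have hdecomp : x * swap i j = x * swap k j * swap i k * swap k j := by
        rw [swap_decomp (ne_of_lt hik) (ne_of_lt hkj) (ne_of_lt hij), ← mul_assoc, ← mul_assoc]
      set y1 := x * swap k j with hy1
      set y2 := y1 * swap i k with hy2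
      have hv1' : y1 i = x i := by
        rw [hy1]; simp only [Equiv.Perm.mul_apply]
        rw [swap_apply_of_ne_of_ne (ne_of_lt hik) (ne_of_lt hij)]
      have hv2' : y1 k = x j := by rw [hy1]; simp [Equiv.Perm.mul_apply]
      have hv3' : y2 k = x i := by
        rw [hy2]; simp only [Equiv.Perm.mul_apply, swap_apply_right]; exact hv1'
      have hv4' : y2 j = x k := by
        rw [hy2]; simp only [Equiv.Perm.mul_apply]
        rw [swap_apply_of_ne_of_ne (ne_of_gt hij) (ne_of_gt hkj), hy1]
        simp [Equiv.Perm.mul_apply]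
      have hs1 : len x < len y1 := len_lt_swap x hkj hv2
      have hs2 : len y1 < len y2 := by
        apply len_lt_swap y1 hik
        rw [hv1', hv2']; exact hx
      have hs3 : len y2 < len (y2 * swap k j) := by
        apply len_lt_swap y2 hkj
        rw [hv3', hv4']; exact hv1
      have hfin : y2 * swap k j = x * swap i j := hdecomp.symm
      rw [← hfin] at hbound
      have hd3 : 3 ≤ d := by omega
      have r1 : Relation.ReflTransGen coverStep x y1 := by
        rw [hy1]
        exact ih (d - 2) (by omega) x k j hkj hv2 (by rw [← hy1]; omega)
      have r2 : Relation.ReflTransGen coverStep y1 y2 := by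
        have := ih (d - 2) (by omega) y1 i k hik (by rw [hv1', hv2']; exact hx)
          (by rw [← hy2]; omega)
        rwa [← hy2] at this
      have r3 : Relation.ReflTransGen coverStep y2 (y2 * swap k j) :=
        ih (d - 2) (by omega) y2 k j hkj (by rw [hv3', hv4']; exact hv1) (by omega)
      rw [← hfin]
      exact (r1.trans r2).trans r3
    · push_neg at hmid
      have hlen := len_swap_add_one x hij hx (by
        intro k h1 h2 hc
        exact absurd hc.2 (by have := hmid k h1 h2 hc.1; omega))
      exact Relation.ReflTransGen.single ⟨i, j, hij, hx, rfl, hlen⟩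

lemma bruhat_to_cover {x w : Equiv.Perm (Fin n)} (h : bruhatLE x w) :
    Relation.ReflTransGen coverStep x w := by
  induction h with
  | refl => exact Relation.ReflTransGen.refl
  | tail hab hbc ih =>
    rename_i b c
    obtain ⟨i, j, hij, hx, rfl⟩ := step_normalize hbc
    exact ih.trans (refine_swap (len (b * swap i j)) b i j hij hx (by omega))

lemma cover_to_bruhat {x w : Equiv.Perm (Fin n)}
    (h : Relation.ReflTransGen coverStep x w) : bruhatLE x w := by
  induction h with
  | refl => exact Relation.ReflTransGen.refl
  | tail hab hbc ih =>
    obtain ⟨i, j, hij, hx, rfl, hlen⟩ := hbc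
    exact ih.tail ⟨swap i j, ⟨i, j, ne_of_lt hij, rfl⟩, rfl, by omega⟩

lemma ms_left (x : Equiv.Perm (Fin n)) (i j : Fin n) : (x * swap i j) i = x j := by
  simp [Equiv.Perm.mul_apply]

lemma ms_right (x : Equiv.Perm (Fin n)) (i j : Fin n) : (x * swap i j) j = x i := by
  simp [Equiv.Perm.mul_apply]

lemma ms_other (x : Equiv.Perm (Fin n)) {i j u : Fin n} (h1 : u ≠ i) (h2 : u ≠ j) :
    (x * swap i j) u = x u := by
  simp only [Equiv.Perm.mul_apply]
  rw [swap_apply_of_ne_of_ne h1 h2]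

/-- Package a successful diamond exchange. -/
lemma mk_result (a b : ℕ) (x z : Equiv.Perm (Fin n)) {i' j' u v : Fin n}
    (h1 : i' < j') (h2 : x i' < x j') (huv : u < v)
    (hz : z = x * swap i' j' * swap u v)
    (h4 : (x * swap i' j') u < (x * swap i' j') v)
    (hlenz : len z = len x + 2)
    (hCC : (i'.val + 1 ≤ a ∧ (x i').val + 1 ≤ b) ∧ ¬(j'.val + 1 ≤ a ∧ (x j').val + 1 ≤ b)) :
    ∃ i₁ j₁ : Fin n, i₁ < j₁ ∧ x i₁ < x j₁ ∧ len (x * swap i₁ j₁) = len x + 1 ∧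
      bruhatLE (x * swap i₁ j₁) z ∧
      ((i₁.val + 1 ≤ a ∧ (x i₁).val + 1 ≤ b) ∧ ¬(j₁.val + 1 ≤ a ∧ (x j₁).val + 1 ≤ b)) := by
  have hs1 : len x < len (x * swap i' j') := len_lt_swap x h1 h2
  have hs2 : len (x * swap i' j') < len (x * swap i' j' * swap u v) :=
    len_lt_swap _ huv h4
  rw [← hz] at hs2
  have hlen1 : len (x * swap i' j') = len x + 1 := by omega
  refine ⟨i', j', h1, h2, hlen1, ?_, hCC⟩
  exact Relation.ReflTransGen.single ⟨swap u v, ⟨u, v, ne_of_lt huv, rfl⟩, hz, by omega⟩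

set_option maxHeartbeats 1600000 in
lemma diamond (a b : ℕ) (x : Equiv.Perm (Fin n)) (i j k l : Fin n)
    (hij : i < j) (hxij : x i < x j)
    (hkl : k < l) (hykl : (x * swap i j) k < (x * swap i j) l)
    (hlen1 : len (x * swap i j) = len x + 1)
    (hlen2 : len (x * swap i j * swap k l) = len (x * swap i j) + 1)
    (hnC : ¬((i.val + 1 ≤ a ∧ (x i).val + 1 ≤ b) ∧ ¬(j.val + 1 ≤ a ∧ (x j).val + 1 ≤ b)))
    (hC : (k.val + 1 ≤ a ∧ ((x * swap i j) k).val + 1 ≤ b) ∧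
      ¬(l.val + 1 ≤ a ∧ ((x * swap i j) l).val + 1 ≤ b)) :
    ∃ i₁ j₁ : Fin n, i₁ < j₁ ∧ x i₁ < x j₁ ∧ len (x * swap i₁ j₁) = len x + 1 ∧
      bruhatLE (x * swap i₁ j₁) (x * swap i j * swap k l) ∧
      ((i₁.val + 1 ≤ a ∧ (x i₁).val + 1 ≤ b) ∧ ¬(j₁.val + 1 ≤ a ∧ (x j₁).val + 1 ≤ b)) := by
  have hijv : i.val < j.val := hij
  have hklv : k.val < l.val := hkl
  have hxv : (x i).val < (x j).val := hxij
  have hlenz : len (x * swap i j * swap k l) = len x + 2 := by omega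
  by_cases hki : k = i
  · subst hki
    by_cases hlj : l = j
    · subst hlj
      rw [swap_cancel] at hlenz
      omega
    · have hlneqi : l ≠ k := (ne_of_gt hkl)
      rw [ms_left] at hykl hC
      rw [ms_other x hlneqi hlj] at hykl hC
      -- now hykl : x j < x l, hC about x l
      rcases lt_or_gt_of_ne (fun h : l = j => hlj h) with hl_lt | hl_gt
      · -- k = i < l < j : use (i, l) then (l, j)
        have hlvj : l.val < j.val := hl_lt
        have hident : swap k j * swap k l = swap k l * swap l j := by
          have e1 : k.val ≠ l.val := fun h => hlneqi (Fin.ext h).symm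
          have e2 : l.val ≠ j.val := fun h => hlj (Fin.ext h)
          ext u
          simp only [Equiv.Perm.mul_apply, swap_val_eq]
          split_ifs <;> omega
        refine mk_result a b x _ hkl (hxij.trans hykl) hl_lt ?_ ?_ hlenz ?_
        · rw [mul_assoc, mul_assoc, hident]
        · rw [ms_right, ms_other x (ne_of_gt hij) (ne_of_gt hl_lt)]
          exact hxij
        · constructor
          · exact ⟨hC.1.1, by omega⟩
          · exact hC.2
      · -- k = i < j < l : use (j, l) then (i, j)
        have hident : swap k j * swap k l = swap j l * swap k j := by
          have e1 : k.val ≠ l.val := fun h => hlneqi (Fin.ext h).symm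
          have e2 : l.val ≠ j.val := fun h => hlj (Fin.ext h)
          ext u
          simp only [Equiv.Perm.mul_apply, swap_val_eq]
          split_ifs <;> omega
        have hfirst : (j.val + 1 ≤ a ∧ (x j).val + 1 ≤ b) := by
          have h1 : k.val + 1 ≤ a := hC.1.1
          have h2 : (x j).val + 1 ≤ b := hC.1.2
          have := hnC
          omega
        refine mk_result a b x _ hl_gt hykl hij ?_ ?_ hlenz ?_
        · rw [mul_assoc, mul_assoc, hident]
        · rw [ms_other x (ne_of_lt hij) (ne_of_lt hkl), ms_left]
          exact hxij.trans hykl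
        · exact ⟨hfirst, hC.2⟩
  · by_cases hkj : k = j
    · subst hkj
      -- i < j = k < l
      have hli : l ≠ i := ne_of_gt (hij.trans hkl)
      have hlk : l ≠ k := ne_of_gt hkl
      rw [ms_right] at hykl hC
      rw [ms_other x hli hlk] at hykl hC
      -- hykl : x i < x l
      rcases lt_or_gt_of_ne (fun h => hlk (x.injective h).symm : x k ≠ x l) with hv_lt | hv_gt
      · -- x k < x l : use (k, l) then (i, l)
        have hident : swap i k * swap k l = swap k l * swap i l := by
          have e1 : i.val ≠ k.val := fun h => hki (Fin.ext h).symm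
          have e2 : k.val ≠ l.val := fun h => hlk (Fin.ext h).symm
          have e3 : i.val ≠ l.val := fun h => hli (Fin.ext h).symm
          ext u
          simp only [Equiv.Perm.mul_apply, swap_val_eq]
          split_ifs <;> omega
        have hfirst : (k.val + 1 ≤ a ∧ (x k).val + 1 ≤ b) := by
          have := hnC
          have h1 := hC.1.1
          have h2 := hC.1.2
          omega
        refine mk_result a b x _ hkl hv_lt (hij.trans hkl) ?_ ?_ hlenz ?_
        · rw [mul_assoc, mul_assoc, hident]
        · rw [ms_other x (Ne.symm hki) (Ne.symm hli), ms_right]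
          exact hxij
        · exact ⟨hfirst, hC.2⟩
      · -- x l < x k : use (i, l) then (i, k)
        have hident : swap i k * swap k l = swap i l * swap i k := by
          have e1 : i.val ≠ k.val := fun h => hki (Fin.ext h).symm
          have e2 : k.val ≠ l.val := fun h => hlk (Fin.ext h).symm
          have e3 : i.val ≠ l.val := fun h => hli (Fin.ext h).symm
          ext u
          simp only [Equiv.Perm.mul_apply, swap_val_eq]
          split_ifs <;> omega
        refine mk_result a b x _ (hij.trans hkl) hykl hij ?_ ?_ hlenz ?_
        · rw [mul_assoc, mul_assoc, hident]
        · rw [ms_left, ms_other x hki (Ne.symm hlk)]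
          exact hv_gt
        · refine ⟨⟨by have := hC.1.1; omega, by have := hC.1.2; omega⟩, hC.2⟩
    · by_cases hli : l = i
      · subst hli
        -- k < l = i < j
        have hkneqj : k ≠ j := hkj
        rw [ms_other x hki hkj] at hykl hC
        rw [ms_left] at hykl hC
        -- hykl : x k < x j ; hC : (k, x k) in rect, not (i, x j) in rect
        rcases lt_or_gt_of_ne (fun h => hki (x.injective h) : x k ≠ x l) with hv_lt | hv_gt
        · -- x k < x i : use (k, i) then (k, j)
          have hident : swap l j * swap k l = swap k l * swap k j := by
            have e1 : k.val ≠ l.val := fun h => hki (Fin.ext h)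
            have e2 : l.val ≠ j.val := fun h => (ne_of_lt hij) (Fin.ext h)
            have e3 : k.val ≠ j.val := fun h => hkj (Fin.ext h)
            ext u
            simp only [Equiv.Perm.mul_apply, swap_val_eq]
            split_ifs <;> omega
          refine mk_result a b x _ hkl hv_lt (hkl.trans hij) ?_ ?_ hlenz ?_
          · rw [mul_assoc, mul_assoc, hident]
          · rw [ms_left, ms_other x (Ne.symm hkneqj) (ne_of_gt hij)]
            exact hxij
          · refine ⟨hC.1, ?_⟩
            intro hcon
            have hnc := hnC
            have hc2 := hC.2
            omega
        · -- x i < x k : use (k, j) then (i, j)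
          have hident : swap l j * swap k l = swap k j * swap l j := by
            have e1 : k.val ≠ l.val := fun h => hki (Fin.ext h)
            have e2 : l.val ≠ j.val := fun h => (ne_of_lt hij) (Fin.ext h)
            have e3 : k.val ≠ j.val := fun h => hkj (Fin.ext h)
            ext u
            simp only [Equiv.Perm.mul_apply, swap_val_eq]
            split_ifs <;> omega
          refine mk_result a b x _ (hkl.trans hij) hykl hij ?_ ?_ hlenz ?_
          · rw [mul_assoc, mul_assoc, hident]
          · rw [ms_other x (Ne.symm hki) (ne_of_lt hij), ms_right]
            exact hv_gt
          · refine ⟨hC.1, ?_⟩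
            intro hcon
            have hc2 := hC.2
            omega
      · by_cases hlj : l = j
        · subst hlj
          -- k < l = j, k ≠ i
          rw [ms_other x hki hkj] at hykl hC
          rw [ms_right] at hykl hC
          -- hykl : x k < x i
          rcases lt_or_gt_of_ne hki with hk_lt | hk_gt
          · -- k < i : use (k, i) then (i, j)
            have hident : swap i l * swap k l = swap k i * swap i l := by
              have e1 : k.val ≠ i.val := fun h => hki (Fin.ext h)
              have e2 : i.val ≠ l.val := fun h => (ne_of_lt hij) (Fin.ext h)
              have e3 : k.val ≠ l.val := fun h => hkj (Fin.ext h)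
              ext u
              simp only [Equiv.Perm.mul_apply, swap_val_eq]
              split_ifs <;> omega
            have hsecond : ¬(i.val + 1 ≤ a ∧ (x i).val + 1 ≤ b) := by
              intro hcon
              have hnc := hnC
              have hc2 := hC.2
              omega
            refine mk_result a b x _ hk_lt hykl hij ?_ ?_ hlenz ?_
            · rw [mul_assoc, mul_assoc, hident]
            · rw [ms_right, ms_other x (Ne.symm hkj) hli]
              exact hykl.trans hxij
            · exact ⟨hC.1, hsecond⟩
          · -- i < k < j : use (k, j) then (i, k)
            have hident : swap i l * swap k l = swap k l * swap i k := by
              have e1 : k.val ≠ i.val := fun h => hki (Fin.ext h)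
              have e2 : i.val ≠ l.val := fun h => (ne_of_lt hij) (Fin.ext h)
              have e3 : k.val ≠ l.val := fun h => hkj (Fin.ext h)
              ext u
              simp only [Equiv.Perm.mul_apply, swap_val_eq]
              split_ifs <;> omega
            have hsecond : ¬(l.val + 1 ≤ a ∧ (x l).val + 1 ≤ b) := by
              intro hcon
              have hc2 := hC.2
              omega
            refine mk_result a b x _ hkl (hykl.trans hxij) hk_gt ?_ ?_ hlenz ?_
            · rw [mul_assoc, mul_assoc, hident]
            · rw [ms_other x (ne_of_lt hk_gt) (ne_of_lt hij), ms_left]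
              exact hxij
            · exact ⟨hC.1, hsecond⟩
        · -- all four distinct
          rw [ms_other x hki hkj] at hykl hC
          rw [ms_other x hli hlj] at hykl hC
          have hident : swap i j * swap k l = swap k l * swap i j := by
            have e1 : k.val ≠ i.val := fun h => hki (Fin.ext h)
            have e2 : k.val ≠ j.val := fun h => hkj (Fin.ext h)
            have e3 : l.val ≠ i.val := fun h => hli (Fin.ext h)
            have e4 : l.val ≠ j.val := fun h => hlj (Fin.ext h)
            have e5 : i.val ≠ j.val := fun h => (ne_of_lt hij) (Fin.ext h)
            have e6 : k.val ≠ l.val := fun h => (ne_of_lt hkl) (Fin.ext h)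
            ext u
            simp only [Equiv.Perm.mul_apply, swap_val_eq]
            split_ifs <;> omega
          refine mk_result a b x _ hkl hykl hij ?_ ?_ hlenz ?_
          · rw [mul_assoc, mul_assoc, hident]
          · rw [ms_other x (Ne.symm hki) (Ne.symm hli), ms_other x (Ne.symm hkj) (Ne.symm hlj)]
            exact hxij
          · exact hC

lemma key_induction (a b : ℕ) : ∀ (m : ℕ) (x w : Equiv.Perm (Fin n)), len w ≤ len x + m →
    bruhatLE x w →
    ∀ g₁ g₂ : ℕ, ((g₁ = a ∧ g₂ ≤ b) ∨ (g₁ ≤ a ∧ g₂ = b)) → rk w g₁ g₂ < rk x g₁ g₂ →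
    ∃ i j : Fin n, i < j ∧ x i < x j ∧ len (x * swap i j) = len x + 1 ∧
      bruhatLE (x * swap i j) w ∧
      ((i.val + 1 ≤ a ∧ (x i).val + 1 ≤ b) ∧ ¬(j.val + 1 ≤ a ∧ (x j).val + 1 ≤ b)) := by
  intro m
  induction m using Nat.strong_induction_on with
  | _ m ih =>
    intro x w hbound hxw g₁ g₂ hγ hrk
    have hcc := bruhat_to_cover hxw
    rcases Relation.ReflTransGen.cases_head hcc with rfl | ⟨y, hstep, hrest⟩
    · omega
    obtain ⟨i, j, hij, hxij, rfl, hlen1⟩ := hstep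
    have hyw : bruhatLE (x * swap i j) w := cover_to_bruhat hrest
    by_cases hCx : (i.val + 1 ≤ a ∧ (x i).val + 1 ≤ b) ∧
        ¬(j.val + 1 ≤ a ∧ (x j).val + 1 ≤ b)
    · exact ⟨i, j, hij, hxij, hlen1, hyw, hCx⟩
    · have hdrop := rk_swap_drop x hij hxij g₁ g₂
      have hnodrop : rk (x * swap i j) g₁ g₂ = rk x g₁ g₂ := by
        by_cases hd : i.val + 1 ≤ g₁ ∧ ¬(j.val + 1 ≤ g₁) ∧
            (x i).val + 1 ≤ g₂ ∧ ¬((x j).val + 1 ≤ g₂)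
        · obtain ⟨hd1, hd2, hd3, hd4⟩ := hd
          refine absurd ?_ hCx
          rcases hγ with ⟨rfl, h⟩ | ⟨h, rfl⟩
          · exact ⟨⟨by omega, by omega⟩, by omega⟩
          · exact ⟨⟨by omega, by omega⟩, by omega⟩
        · rw [if_neg hd] at hdrop; omega
      have hwlow : len x + 1 ≤ len w := by
        rcases len_mono hyw with heq | hlt
        · rw [← heq]; omega
        · omega
      have hrky : rk w g₁ g₂ < rk (x * swap i j) g₁ g₂ := by omega
      obtain ⟨k, l, hkl, hykl, hlen2, hzw, hCy⟩ :=
        ih (m - 1) (by omega) (x * swap i j) w (by omega) hyw g₁ g₂ hγ hrky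
      obtain ⟨i₁, j₁, h1, h2, h3, h4, h5⟩ :=
        diamond a b x i j k l hij hxij hkl hykl hlen1 hlen2 hCx hCy
      exact ⟨i₁, j₁, h1, h2, h3, h4.trans hzw, h5⟩

theorem stmt18 (n : ℕ) (x w : Equiv.Perm (Fin n)) (hxw : bruhatLE x w)
    (p : ℕ × ℕ) (hp1 : p.1 ≤ n) (hp2 : p.2 ≤ n)
    (hrk : rk w p.1 p.2 < rk x p.1 p.2) :
    ∃ i₁ i₂ : Fin n, i₁ < i₂ ∧
      bruhatLT x (x * Equiv.swap i₁ i₂) ∧ len (x * Equiv.swap i₁ i₂) = len x + 1 ∧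
      bruhatLE (x * Equiv.swap i₁ i₂) w ∧
      (i₁.val + 1 ≤ p.1 ∧ (x i₁).val + 1 ≤ p.2) ∧
      ¬(i₂.val + 1 ≤ p.1 ∧ (x i₂).val + 1 ≤ p.2) := by
  obtain ⟨i, j, hij, hxij, hlen, hle, hC⟩ :=
    key_induction p.1 p.2 (len w) x w (by omega) hxw p.1 p.2 (Or.inl ⟨rfl, le_refl _⟩) hrk
  refine ⟨i, j, hij, ⟨?_, ?_⟩, hlen, hle, hC.1, hC.2⟩
  · exact Relation.ReflTransGen.single ⟨swap i j, ⟨i, j, ne_of_lt hij, rfl⟩, rfl, by omega⟩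
  · intro h
    rw [← h] at hlen
    omega
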